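/- arXiv:2204.04373 — 4 statements merged into one kernel-verified Lean document; each statement's English description precedes it below -/
import Mathlib

section
/- For every finite simple noncomplete graph G, the binding number is at most the isolated toughness: bind(G) ≤ I(G). -/
open SimpleGraph

variable {V : Type*}

/-- The number of connected components of `G - S`, the subgraph of `G`
induced on the complement of the vertex set `S`. -/
noncomputable def compCount (G : SimpleGraph V) (S : Set V) : ℕ :=
  Nat.card (G.induce (Sᶜ : Set V)).ConnectedComponent

/-- The number of isolated vertices of `G - S`, the subgraph of `G`
induced on the complement of the vertex set `S`. -/
noncomputable def isoCount (G : SimpleGraph V) (S : Set V) : ℕ :=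
  {v : V | v ∉ S ∧ ∀ w : V, G.Adj v w → w ∈ S}.ncard

/-- The neighbourhood `N_G(Y)` of a set of vertices `Y`. -/
def nbhd (G : SimpleGraph V) (Y : Set V) : Set V := {v : V | ∃ y ∈ Y, G.Adj y v}

/-- `G` has a spanning subgraph each of whose connected components is
isomorphic to `K₂` or to an odd cycle `C_{2i+1}` with `i ≥ 2`. -/
def HasK2OddCycleFactor (G : SimpleGraph V) : Prop :=
  ∃ F : SimpleGraph V, F ≤ G ∧ ∀ c : F.ConnectedComponent,
    Nonempty (F.induce c.supp ≃g (⊤ : SimpleGraph (Fin 2))) ∨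
    ∃ i : ℕ, 2 ≤ i ∧ Nonempty (F.induce c.supp ≃g cycleGraph (2 * i + 1))

/-- The toughness `t(G)`: the minimum of `|S| / c(G - S)` over vertex sets `S`
with `c(G - S) ≥ 2`. -/
noncomputable def toughness (G : SimpleGraph V) : ℝ :=
  sInf {x : ℝ | ∃ S : Set V, 2 ≤ compCount G S ∧ x = (S.ncard : ℝ) / (compCount G S : ℝ)}

/-- The isolated toughness `I(G)`: the minimum of `|S| / iso(G - S)` over vertex
sets `S` with `iso(G - S) ≥ 2`. -/
noncomputable def isoToughness (G : SimpleGraph V) : ℝ :=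
  sInf {x : ℝ | ∃ S : Set V, 2 ≤ isoCount G S ∧ x = (S.ncard : ℝ) / (isoCount G S : ℝ)}

/-- The variant isolated toughness `I'(G)`: the minimum of `|S| / (iso(G - S) - 1)`
over vertex sets `S` with `iso(G - S) ≥ 2`. -/
noncomputable def isoToughness' (G : SimpleGraph V) : ℝ :=
  sInf {x : ℝ | ∃ S : Set V, 2 ≤ isoCount G S ∧ x = (S.ncard : ℝ) / ((isoCount G S : ℝ) - 1)}

/-- The binding number `bind(G)`: the minimum of `|N_G(Y)| / |Y|` over nonempty
vertex sets `Y` with `N_G(Y) ≠ V(G)`. -/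
noncomputable def bindingNumber (G : SimpleGraph V) : ℝ :=
  sInf {x : ℝ | ∃ Y : Set V, Y.Nonempty ∧ nbhd G Y ≠ Set.univ ∧
    x = ((nbhd G Y).ncard : ℝ) / (Y.ncard : ℝ)}

/-- `G_m`: the complete graph on `m - 1` vertices together with `m` independent
vertices each joined to every vertex of the complete graph. -/
def Gm (m : ℕ) : SimpleGraph (Fin (m - 1) ⊕ Fin m) where
  Adj x y := x ≠ y ∧ ¬(x.isRight ∧ y.isRight)
  symm := ⟨fun x y ⟨h1, h2⟩ => ⟨h1.symm, fun ⟨a, b⟩ => h2 ⟨b, a⟩⟩⟩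
  loopless := ⟨fun x ⟨h, _⟩ => h rfl⟩

/-- `H_m`: the complete graph on `m - 1` vertices together with `m` pairwise
disjoint triangles, every vertex of each triangle joined to every vertex of the
complete graph. -/
def Hm (m : ℕ) : SimpleGraph (Fin (m - 1) ⊕ (Fin m × Fin 3)) where
  Adj x y := x ≠ y ∧ ∀ p q : Fin m × Fin 3, x = Sum.inr p → y = Sum.inr q → p.1 = q.1
  symm := ⟨fun x y ⟨h1, h2⟩ => ⟨h1.symm, fun p q hp hq => (h2 q p hq hp).symm⟩⟩
  loopless := ⟨fun x ⟨h, _⟩ => h rfl⟩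

/-- `B` is a connected set of vertices of `G` with no cut vertex of the induced graph. -/
def NoCutConn (G : SimpleGraph V) (B : Set V) : Prop :=
  (G.induce B).Connected ∧ ∀ v ∈ B, B = {v} ∨ (G.induce (B \ {v})).Connected

/-- `B` is (the vertex set of) a block of `G`: a maximal connected subgraph
without a cut vertex. -/
def IsBlock (G : SimpleGraph V) (B : Set V) : Prop :=
  NoCutConn G B ∧ ∀ C : Set V, B ⊆ C → NoCutConn G C → B = C

/-- A triangular-cactus: a connected graph each of whose blocks is a triangle. -/
def IsTriangularCactus (G : SimpleGraph V) : Prop :=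
  G.Connected ∧ ∀ B : Set V, IsBlock G B → Nonempty (G.induce B ≃g (⊤ : SimpleGraph (Fin 3)))

/-! The isolated vertices `Y` of `G - S` have all their neighbours in `S` and none in `Y`, so `Y`
is admissible in the definition of `bind(G)` with `|N(Y)| / |Y| ≤ |S| / iso(G - S)`. A non-adjacent
pair `u, v` makes the infimum defining `I(G)` range over a nonempty set, via `S = V \ {u, v}`. -/

def isolatedVerts (G : SimpleGraph V) (S : Set V) : Set V :=
  {v : V | v ∉ S ∧ ∀ w : V, G.Adj v w → w ∈ S}

section

variable (G : SimpleGraph V)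

theorem isoCount_eq_ncard_isolatedVerts (S : Set V) :
    isoCount G S = (isolatedVerts G S).ncard := rfl

theorem nbhd_isolatedVerts_subset (S : Set V) : nbhd G (isolatedVerts G S) ⊆ S :=
  fun _ ⟨_, hy, hadj⟩ => hy.2 _ hadj

theorem isolatedVerts_compl_pair {u v : V} (h : ¬ G.Adj u v) :
    isolatedVerts G ({u, v} : Set V)ᶜ = {u, v} := by
  ext w
  simp only [isolatedVerts, Set.mem_ofPred_eq, Set.mem_compl_iff, not_not]
  refine ⟨And.left, fun hw => ⟨hw, fun z hz hzuv => ?_⟩⟩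
  rcases hw with rfl | rfl <;> rcases hzuv with rfl | rfl
  exacts [G.loopless.irrefl _ hz, h hz, h hz.symm, G.loopless.irrefl _ hz]

theorem isoCount_compl_pair {u v : V} (huv : u ≠ v) (h : ¬ G.Adj u v) :
    isoCount G ({u, v} : Set V)ᶜ = 2 := by
  rw [isoCount_eq_ncard_isolatedVerts, isolatedVerts_compl_pair G h, Set.ncard_pair huv]

theorem bindingNumber_le_ncard_nbhd_div {Y : Set V} (hY : Y.Nonempty)
    (hN : nbhd G Y ≠ Set.univ) : bindingNumber G ≤ ((nbhd G Y).ncard : ℝ) / (Y.ncard : ℝ) := by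
  refine csInf_le ⟨0, ?_⟩ ⟨Y, hY, hN, rfl⟩
  rintro x ⟨Z, -, -, rfl⟩
  positivity

theorem bindingNumber_le_ncard_div_isoCount [Finite V] {S : Set V} (hS : isoCount G S ≠ 0) :
    bindingNumber G ≤ (S.ncard : ℝ) / (isoCount G S : ℝ) := by
  rw [isoCount_eq_ncard_isolatedVerts] at hS ⊢
  set Y := isolatedVerts G S
  have hY : Y.Nonempty := Set.nonempty_of_ncard_ne_zero hS
  have hNS : nbhd G Y ⊆ S := nbhd_isolatedVerts_subset G S
  have hN : nbhd G Y ≠ Set.univ := by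
    obtain ⟨y, hy⟩ := hY
    exact fun h => hy.1 (hNS (h ▸ Set.mem_univ y))
  calc bindingNumber G ≤ ((nbhd G Y).ncard : ℝ) / (Y.ncard : ℝ) :=
        bindingNumber_le_ncard_nbhd_div G hY hN
    _ ≤ (S.ncard : ℝ) / (Y.ncard : ℝ) := by
        gcongr
        exact S.toFinite

end

theorem stmt13 {V : Type*} [Fintype V] (G : SimpleGraph V)
    (hnc : ∃ u v : V, u ≠ v ∧ ¬ G.Adj u v) :
    bindingNumber G ≤ isoToughness G := by
  obtain ⟨u, v, huv, hadj⟩ := hnc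
  refine le_csInf ⟨_, ({u, v} : Set V)ᶜ, (isoCount_compl_pair G huv hadj).ge, rfl⟩ ?_
  rintro x ⟨S, hS, rfl⟩
  exact bindingNumber_le_ncard_div_isoCount G (by omega)
end

section
/- For every integer m ≥ 3, let G_m be the graph obtained from a complete graph K on m − 1 vertices by adding m new pairwise non-adjacent vertices, each joined to every vertex of K. Then G_m admits no {K₂, C_{2i+1} | i ≥ 2}-factor and its toughness equals t(G_m) = (m − 1)/m. -/
open SimpleGraph

variable {V : Type*}

/-
A `{K₂, C_{2i+1}}`-factor orients into a permutation `σ` of the vertices with `v ~ σ v`, so an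
independent set `I` is disjoint from `σ I` and `2|I| ≤ |V|`. In `G_m` the `m` independent vertices
outnumber the `m - 1` others, so no factor exists.

Each vertex of `K` dominates `G_m`, so any `S` with `c(G_m - S) ≥ 2` contains `K` and `G_m - S` is
edgeless with `k ≤ m` vertices; then `|S| / k = (2m - 1 - k) / k ≥ (m - 1) / m`, with equality
for `S = K`.
-/

namespace SimpleGraph

variable {W : Type*}

/-- A perfect 2-matching (a spanning subgraph whose components are `K₂`'s and cycles), encoded by
a permutation sending every vertex to a neighbour: its 2-cycles are the `K₂`'s. -/
def HasPerfectTwoMatching (G : SimpleGraph V) : Prop :=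
  ∃ σ : Equiv.Perm V, ∀ v, G.Adj v (σ v)

theorem HasPerfectTwoMatching.mono {G H : SimpleGraph V} (hGH : G ≤ H)
    (hG : G.HasPerfectTwoMatching) : H.HasPerfectTwoMatching :=
  let ⟨σ, hσ⟩ := hG
  ⟨σ, fun v => hGH (hσ v)⟩

theorem HasPerfectTwoMatching.of_iso {G : SimpleGraph V} {H : SimpleGraph W} (e : G ≃g H)
    (hH : H.HasPerfectTwoMatching) : G.HasPerfectTwoMatching := by
  obtain ⟨σ, hσ⟩ := hH
  refine ⟨e.toEquiv.symm.permCongr σ, fun v => e.map_adj_iff.mp ?_⟩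
  convert hσ (e v)
  exact e.toEquiv.apply_symm_apply _

theorem hasPerfectTwoMatching_top_fin_two : (⊤ : SimpleGraph (Fin 2)).HasPerfectTwoMatching :=
  ⟨Equiv.swap 0 1, by decide⟩

theorem hasPerfectTwoMatching_cycleGraph {n : ℕ} (hn : 2 ≤ n) :
    (cycleGraph n).HasPerfectTwoMatching := by
  obtain ⟨k, rfl⟩ : ∃ k, n = k + 2 := ⟨n - 2, by omega⟩
  exact ⟨Equiv.addRight 1, fun v => cycleGraph_adj.mpr (Or.inr (add_sub_cancel_left v 1))⟩

theorem hasPerfectTwoMatching_of_forall_connectedComponent {G : SimpleGraph V}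
    (h : ∀ c : G.ConnectedComponent, (G.induce c.supp).HasPerfectTwoMatching) :
    G.HasPerfectTwoMatching := by
  choose τ hτ using h
  refine ⟨(Equiv.sigmaFiberEquiv G.connectedComponentMk).permCongr (Equiv.sigmaCongrRight τ),
    fun v => ?_⟩
  exact hτ (G.connectedComponentMk v) ⟨v, rfl⟩

theorem HasPerfectTwoMatching.two_mul_ncard_le [Finite V] {G : SimpleGraph V}
    (hG : G.HasPerfectTwoMatching) {s : Set V} (hs : G.IsIndepSet s) :
    2 * s.ncard ≤ Nat.card V := by
  obtain ⟨σ, hσ⟩ := hG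
  have hdisj : Disjoint s (σ '' s) := by
    refine Set.disjoint_right.mpr ?_
    rintro _ ⟨u, hu, rfl⟩ hus
    exact hs hu hus (hσ u).ne (hσ u)
  calc 2 * s.ncard = (s ∪ σ '' s).ncard := by
        rw [Set.ncard_union_eq hdisj, Set.ncard_image_of_injective _ σ.injective, two_mul]
    _ ≤ Nat.card V := Set.ncard_le_card _

theorem HasK2OddCycleFactor.hasPerfectTwoMatching {G : SimpleGraph V}
    (hG : HasK2OddCycleFactor G) : G.HasPerfectTwoMatching := by
  obtain ⟨F, hFG, hF⟩ := hG
  refine HasPerfectTwoMatching.mono hFG (hasPerfectTwoMatching_of_forall_connectedComponent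
    fun c => ?_)
  rcases hF c with ⟨⟨e⟩⟩ | ⟨i, hi, ⟨e⟩⟩
  · exact .of_iso e hasPerfectTwoMatching_top_fin_two
  · exact .of_iso e (hasPerfectTwoMatching_cycleGraph (by omega))

theorem compCount_le_one_of_forall_adj {G : SimpleGraph V} {S : Set V} {v : V} (hv : v ∉ S)
    (hadj : ∀ w, w ≠ v → G.Adj v w) : compCount G S ≤ 1 := by
  set v' : (Sᶜ : Set V) := ⟨v, hv⟩
  have hreach : ∀ u, (G.induce Sᶜ).Reachable v' u := fun u => by
    by_cases hu : u = v'
    · exact hu ▸ .refl _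
    · exact Adj.reachable (G := G.induce Sᶜ) (hadj u fun h => hu (Subtype.ext h))
  have hpre : (G.induce Sᶜ).Preconnected := fun u w => (hreach u).symm.trans (hreach w)
  have := hpre.subsingleton_connectedComponent
  exact Finite.card_le_one_iff_subsingleton.mpr this

theorem compCount_eq_ncard_compl {G : SimpleGraph V} {S : Set V} (hS : G.IsIndepSet Sᶜ) :
    compCount G S = Sᶜ.ncard := by
  have hbot : G.induce Sᶜ = ⊥ := by
    ext u w
    exact iff_false_intro fun huw => hS u.2 w.2 (fun h => huw.ne (Subtype.ext h)) huw
  rw [compCount, hbot, ← Nat.card_coe_set_eq]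
  refine (Nat.card_eq_of_bijective _ ⟨fun u w huw => ?_, fun c => c.exists_rep⟩).symm
  exact reachable_bot.mp (ConnectedComponent.eq.mp huw)

end SimpleGraph

namespace Gm

variable {m : ℕ}

theorem adj_inl (a : Fin (m - 1)) {x : Fin (m - 1) ⊕ Fin m} (hx : x ≠ .inl a) :
    (Gm m).Adj (.inl a) x :=
  ⟨hx.symm, fun h => by simp at h⟩

theorem isIndepSet_range_inr : (Gm m).IsIndepSet (Set.range Sum.inr) := by
  rintro _ ⟨a, rfl⟩ _ ⟨b, rfl⟩ - hab
  exact hab.2 ⟨rfl, rfl⟩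

theorem not_hasK2OddCycleFactor (hm : 1 ≤ m) : ¬ HasK2OddCycleFactor (Gm m) := by
  intro h
  have := h.hasPerfectTwoMatching.two_mul_ncard_le isIndepSet_range_inr
  rw [Set.ncard_range_of_injective Sum.inr_injective] at this
  simp only [Nat.card_eq_fintype_card, Fintype.card_sum, Fintype.card_fin] at this
  omega

theorem range_inl_subset_of_two_le_compCount {S : Set (Fin (m - 1) ⊕ Fin m)}
    (h : 2 ≤ compCount (Gm m) S) : Set.range Sum.inl ⊆ S := by
  rintro _ ⟨a, rfl⟩
  by_contra ha
  have := compCount_le_one_of_forall_adj ha fun w hw => adj_inl a hw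
  omega

theorem compCount_eq_ncard_compl {S : Set (Fin (m - 1) ⊕ Fin m)}
    (hS : Set.range Sum.inl ⊆ S) : compCount (Gm m) S = Sᶜ.ncard :=
  SimpleGraph.compCount_eq_ncard_compl <| isIndepSet_range_inr.mono <| by
    rwa [← Set.compl_range_inl, Set.compl_subset_compl]

theorem toughness_eq (hm : 2 ≤ m) : toughness (Gm m) = ((m : ℝ) - 1) / m := by
  have hcard_inr : (Set.range (Sum.inr : Fin m → Fin (m - 1) ⊕ Fin m)).ncard = m := by
    simp [Set.ncard_range_of_injective Sum.inr_injective]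
  refine IsLeast.csInf_eq ⟨⟨Set.range Sum.inl, ?_, ?_⟩, ?_⟩
  · rw [compCount_eq_ncard_compl subset_rfl, Set.compl_range_inl, hcard_inr]
    exact hm
  · rw [compCount_eq_ncard_compl subset_rfl, Set.compl_range_inl, hcard_inr,
      Set.ncard_range_of_injective Sum.inl_injective]
    simp [Nat.cast_sub (by omega : 1 ≤ m)]
  rintro _ ⟨S, h2, rfl⟩
  have hS := range_inl_subset_of_two_le_compCount h2
  rw [compCount_eq_ncard_compl hS] at h2 ⊢
  have hk : Sᶜ.ncard ≤ m := calc
    Sᶜ.ncard ≤ (Set.range Sum.inl)ᶜ.ncard := Set.ncard_le_ncard (Set.compl_subset_compl.mpr hS)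
    _ = m := by rw [Set.compl_range_inl, hcard_inr]
  have htot : S.ncard + Sᶜ.ncard + 1 = 2 * m := by
    rw [Set.ncard_add_ncard_compl]
    simp only [Nat.card_eq_fintype_card, Fintype.card_sum, Fintype.card_fin]
    omega
  have hkR : (Sᶜ.ncard : ℝ) ≤ m := by exact_mod_cast hk
  have htotR : (S.ncard : ℝ) + Sᶜ.ncard + 1 = 2 * m := by exact_mod_cast htot
  rw [div_le_div_iff₀ (by positivity) (by positivity)]
  nlinarith

end Gm

theorem stmt15 (m : ℕ) (hm : 3 ≤ m) :
    ¬ HasK2OddCycleFactor (Gm m) ∧ toughness (Gm m) = ((m : ℝ) - 1) / (m : ℝ) :=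
  ⟨Gm.not_hasK2OddCycleFactor (by omega), Gm.toughness_eq (by omega)⟩
end

section
/- For every integer m ≥ 3, let H_m be the graph obtained from a complete graph K on m − 1 vertices and m pairwise disjoint triangles by joining every vertex of each triangle to every vertex of K. Then H_m admits no {K₂, C_{2i+1} | i ≥ 2}-factor and its isolated toughness equals I(H_m) = (3m − 1)/m. -/
open SimpleGraph

variable {V : Type*}

/-!
Let `K` be the clique and `T₁, …, Tₘ` the triangles of `H_m`, and let `F` be a
`{K₂, C_{2i+1}}`-factor. A triangle cannot be a union of components of `F` (these have order `2`
or at least `5`), so some `F`-edge joins it to `K`. If only one does, that edge is a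
`K₂`-component: otherwise the triangle vertices on its cycle would span a vertex set of a
`2`-regular graph with exactly one edge leaving it, against parity. Hence if every vertex of `K`
spreads a weight `2` evenly over its `F`-edges, each triangle receives at least `2`, more than
the `2(m - 1)` available.

Isolated vertices of `H_m - S` lie in distinct triangles, and `S` contains `K` and their
triangle-mates, so `|S| ≥ m - 1 + 2 iso(H_m - S)` with `iso(H_m - S) ≤ m`; this gives
`|S| / iso(H_m - S) ≥ (3m - 1) / m`, attained by deleting all but one vertex of each triangle.
-/
open Finset

namespace SimpleGraph

variable {V : Type*} {F : SimpleGraph V}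

lemma ConnectedComponent.supp_subset_of_adj_closed {X : Set V}
    (hX : ∀ x ∈ X, ∀ y, F.Adj x y → y ∈ X) {x : V} (hx : x ∈ X) :
    (F.connectedComponentMk x).supp ⊆ X := by
  intro y hy
  obtain ⟨p⟩ := ConnectedComponent.exact hy.symm
  clear hy
  induction p with
  | nil => exact hx
  | cons h _ ih => exact ih (hX _ hx _ h)

variable [Fintype V] [DecidableRel F.Adj]

lemma even_sum_card_neighborFinset_inter [DecidableEq V] (X : Finset V) :
    Even (∑ x ∈ X, #(F.neighborFinset x ∩ X)) := by
  have hdeg (v : (X : Set V)) : (F.induce (X : Set V)).degree v = #(F.neighborFinset v ∩ X) := by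
    have := congrArg Finset.card (map_neighborFinset_induce (G := F) (s := (X : Set V)) v)
    rw [card_map, Finset.toFinset_coe] at this
    rw [← this, card_neighborFinset_eq_degree]
    congr!
  have := (F.induce (X : Set V)).sum_degrees_eq_twice_card_edges
  simp only [hdeg] at this
  rw [← Finset.sum_coe_sort X]
  exact ⟨_, this.trans (two_mul _)⟩

lemma even_sum_card_neighborFinset_sdiff [DecidableEq V] {X : Finset V}
    (hX : ∀ x ∈ X, Even (F.degree x)) :
    Even (∑ x ∈ X, #(F.neighborFinset x \ X)) := by
  have hsplit : ∑ x ∈ X, #(F.neighborFinset x \ X) + ∑ x ∈ X, #(F.neighborFinset x ∩ X) =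
      ∑ x ∈ X, F.degree x := by
    rw [← Finset.sum_add_distrib]
    exact Finset.sum_congr rfl fun x _ => by
      rw [card_sdiff_add_card_inter, card_neighborFinset_eq_degree]
  have hsum : Even (∑ x ∈ X, F.degree x) := Finset.even_sum _ hX
  rw [← hsplit] at hsum
  exact (Nat.even_add.mp hsum).mpr (even_sum_card_neighborFinset_inter X)

/-- Every component is a single edge or a cycle on at least five vertices, recorded through
orders and degrees (a connected `2`-regular graph is a cycle). -/
def EdgeOrLongCycleComponents (F : SimpleGraph V) [DecidableRel F.Adj] : Prop :=
  ∀ c : F.ConnectedComponent, (c.supp.ncard = 2 ∧ ∀ v ∈ c.supp, F.degree v = 1) ∨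
    (5 ≤ c.supp.ncard ∧ ∀ v ∈ c.supp, F.degree v = 2)

lemma edgeOrLongCycleComponents_of_forall_iso
    (h : ∀ c : F.ConnectedComponent,
      Nonempty (F.induce c.supp ≃g (⊤ : SimpleGraph (Fin 2))) ∨
      ∃ i : ℕ, 2 ≤ i ∧ Nonempty (F.induce c.supp ≃g cycleGraph (2 * i + 1))) :
    EdgeOrLongCycleComponents F := by
  classical
  intro c
  have degree_induce_supp {v : V} (hv : v ∈ c.supp) :
      (F.induce c.supp).degree ⟨v, hv⟩ = F.degree v :=
    degree_induce_of_neighborSet_subset fun _ hw => c.mem_supp_of_adj_mem_supp hv hw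
  rcases h c with ⟨⟨e⟩⟩ | ⟨i, hi, ⟨e⟩⟩
  · refine Or.inl ⟨?_, fun v hv => ?_⟩
    · rw [← Nat.card_coe_set_eq, Nat.card_congr e.toEquiv, Nat.card_eq_fintype_card,
        Fintype.card_fin]
    · rw [← degree_induce_supp hv, ← e.degree_eq, complete_graph_degree, Fintype.card_fin]
  · obtain ⟨n, hn⟩ : ∃ n, 2 * i + 1 = n + 3 := ⟨2 * i - 2, by omega⟩
    rw [hn] at e
    refine Or.inr ⟨?_, fun v hv => ?_⟩
    · rw [← Nat.card_coe_set_eq, Nat.card_congr e.toEquiv, Nat.card_eq_fintype_card,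
        Fintype.card_fin]
      omega
    · rw [← degree_induce_supp hv, ← e.degree_eq, cycleGraph_degree_three_le]

namespace EdgeOrLongCycleComponents

variable (hF : EdgeOrLongCycleComponents F)
include hF

lemma two_le_ncard_supp (c : F.ConnectedComponent) : 2 ≤ c.supp.ncard := by
  rcases hF c with ⟨h, _⟩ | ⟨h, _⟩ <;> omega

lemma degree_eq_one_or_two (v : V) : F.degree v = 1 ∨ F.degree v = 2 :=
  (hF _).imp (fun h => h.2 v ConnectedComponent.connectedComponentMk_mem)
    (fun h => h.2 v ConnectedComponent.connectedComponentMk_mem)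

lemma degree_eq_two_of_mem_supp {v w : V} (hv : F.degree v = 2)
    (hw : w ∈ (F.connectedComponentMk v).supp) : F.degree w = 2 := by
  rcases hF (F.connectedComponentMk v) with ⟨_, h⟩ | ⟨_, h⟩
  · have := h v ConnectedComponent.connectedComponentMk_mem
    omega
  · exact h w hw

lemma card_ne_three_of_adj_closed {X : Finset V} (hX : ∀ x ∈ X, ∀ y, F.Adj x y → y ∈ X) :
    #X ≠ 3 := by
  intro h3
  obtain ⟨x, hx⟩ : X.Nonempty := Finset.card_pos.mp (by omega)
  set C := F.connectedComponentMk x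
  have hCX : C.supp ⊆ X := ConnectedComponent.supp_subset_of_adj_closed hX hx
  have hC2 : C.supp.ncard = 2 := by
    have := Set.ncard_le_ncard hCX
    rw [Set.ncard_coe_finset] at this
    rcases hF C with ⟨h, _⟩ | ⟨h, _⟩ <;> omega
  set Y := (X : Set V) \ C.supp
  have hY : ∀ y ∈ Y, ∀ z, F.Adj y z → z ∈ Y := fun y hy z hyz =>
    ⟨hX y hy.1 z hyz, fun hz => hy.2 (C.mem_supp_of_adj_mem_supp hz hyz.symm)⟩
  have hY1 : Y.ncard = 1 := by
    rw [Set.ncard_sdiff hCX, Set.ncard_coe_finset, hC2, h3]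
  obtain ⟨z, hz⟩ := Set.ncard_eq_one.mp hY1
  have := Set.ncard_le_ncard
    (ConnectedComponent.supp_subset_of_adj_closed hY (hz ▸ Set.mem_singleton z))
  rw [hz, Set.ncard_singleton] at this
  have := hF.two_le_ncard_supp (F.connectedComponentMk z)
  omega

lemma degree_eq_one_of_unique_adj_out [DecidableEq V] {X : Finset V} {x y : V} (hx : x ∈ X)
    (hy : y ∉ X) (hxy : F.Adj x y)
    (huniq : ∀ x' ∈ X, ∀ y' ∉ X, F.Adj x' y' → x' = x ∧ y' = y) : F.degree y = 1 := by
  refine (hF.degree_eq_one_or_two y).resolve_right fun hy2 => ?_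
  set C := F.connectedComponentMk y
  set X' := X.filter (· ∈ C.supp)
  have hx' : x ∈ X' := mem_filter.mpr
    ⟨hx, C.mem_supp_of_adj_mem_supp ConnectedComponent.connectedComponentMk_mem hxy.symm⟩
  have hout : ∀ x' ∈ X', ∀ z ∈ F.neighborFinset x', z ∉ X' → x' = x ∧ z = y := by
    intro x' hx' z hz hzX'
    rw [mem_neighborFinset] at hz
    obtain ⟨hx'X, hx'C⟩ := mem_filter.mp hx'
    exact huniq x' hx'X z (fun hzX => hzX' (mem_filter.mpr
      ⟨hzX, C.mem_supp_of_adj_mem_supp hx'C hz⟩)) hz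
  have hone : ∑ x' ∈ X', #(F.neighborFinset x' \ X') = 1 := by
    rw [Finset.sum_eq_single_of_mem x hx']
    · refine card_eq_one.mpr ⟨y, eq_singleton_iff_unique_mem.mpr ⟨?_, ?_⟩⟩
      · exact mem_sdiff.mpr
          ⟨(mem_neighborFinset _ _ _).mpr hxy, fun h => hy (mem_filter.mp h).1⟩
      · exact fun z hz => (hout x hx' z (mem_sdiff.mp hz).1 (mem_sdiff.mp hz).2).2
    · intro x' hx' hne
      rw [card_eq_zero, sdiff_eq_empty_iff_subset]
      exact fun z hz => by_contra fun hzX' => hne (hout x' hx' z hz hzX').1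
  have heven := even_sum_card_neighborFinset_sdiff (X := X') fun x' hx' => by
    rw [hF.degree_eq_two_of_mem_supp hy2 (mem_filter.mp hx').2]
    exact even_two
  rw [hone] at heven
  exact Nat.not_even_one heven

end EdgeOrLongCycleComponents

end SimpleGraph

def isoSet {V : Type*} (G : SimpleGraph V) (S : Set V) : Set V :=
  {v : V | v ∉ S ∧ ∀ w : V, G.Adj v w → w ∈ S}

lemma isoCount_eq_ncard_isoSet {V : Type*} (G : SimpleGraph V) (S : Set V) :
    isoCount G S = (isoSet G S).ncard := rfl

namespace Hm

open SimpleGraph Sum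

variable {m : ℕ}

@[simp] lemma adj_inl_inl {a b : Fin (m - 1)} : (Hm m).Adj (inl a) (inl b) ↔ a ≠ b := by
  simp [Hm]

@[simp] lemma adj_inl_inr {a : Fin (m - 1)} {p : Fin m × Fin 3} : (Hm m).Adj (inl a) (inr p) := by
  simp [Hm]

@[simp] lemma adj_inr_inl {a : Fin (m - 1)} {p : Fin m × Fin 3} : (Hm m).Adj (inr p) (inl a) := by
  simp [Hm]

@[simp] lemma adj_inr_inr {p q : Fin m × Fin 3} :
    (Hm m).Adj (inr p) (inr q) ↔ p ≠ q ∧ p.1 = q.1 := by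
  simp only [Hm, ne_eq, inr.injEq]
  exact and_congr_right fun _ => ⟨fun h => h p q rfl rfl, fun h _ _ hp hq => hp ▸ hq ▸ h⟩

lemma adj_inl_of_ne {a : Fin (m - 1)} {v : Fin (m - 1) ⊕ (Fin m × Fin 3)} (h : v ≠ inl a) :
    (Hm m).Adj (inl a) v := by
  rcases v with b | p
  · exact adj_inl_inl.mpr fun hab => h (hab ▸ rfl)
  · exact adj_inl_inr

section Factor

variable {F : SimpleGraph (Fin (m - 1) ⊕ (Fin m × Fin 3))} [DecidableRel F.Adj]

lemma two_le_card_adj_triangle_or_exists_degree_eq_one (hFH : F ≤ Hm m)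
    (hF : EdgeOrLongCycleComponents F) (j : Fin m) :
    2 ≤ #{q : Fin (m - 1) × Fin 3 | F.Adj (inl q.1) (inr (j, q.2))} ∨
      ∃ a k, F.Adj (inl a) (inr (j, k)) ∧ F.degree (inl a) = 1 := by
  classical
  set T : Finset (Fin (m - 1) ⊕ (Fin m × Fin 3)) := univ.image fun k => inr (j, k)
  have hT : ∀ x ∈ T, ∀ y ∉ T, F.Adj x y →
      ∃ a k, x = inr (j, k) ∧ y = inl a ∧ F.Adj (inl a) (inr (j, k)) := by
    intro x hx y hy hxy
    obtain ⟨k, -, rfl⟩ := mem_image.mp hx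
    rcases y with a | q
    · exact ⟨a, k, rfl, rfl, hxy.symm⟩
    · have hq : j = q.1 := (adj_inr_inr.mp (hFH hxy)).2
      exact absurd (mem_image.mpr ⟨q.2, mem_univ _, by rw [hq]⟩) hy
  set cross : Finset (Fin (m - 1) × Fin 3) := {q | F.Adj (inl q.1) (inr (j, q.2))}
  by_cases h2 : 2 ≤ #cross
  · exact Or.inl h2
  right
  obtain ⟨⟨a, k⟩, hak⟩ : cross.Nonempty := by
    rw [nonempty_iff_ne_empty, Ne, filter_eq_empty_iff]
    intro hnone
    refine hF.card_ne_three_of_adj_closed (X := T) (fun x hx y hxy => by_contra fun hy => ?_) ?_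
    · obtain ⟨a, k, -, -, h⟩ := hT x hx y hy hxy
      exact hnone (mem_univ (a, k)) h
    · rw [card_image_of_injective _ fun k k' h => by simpa using h, card_univ, Fintype.card_fin]
  have hak' : F.Adj (inl a) (inr (j, k)) := (mem_filter.mp hak).2
  refine ⟨a, k, hak', hF.degree_eq_one_of_unique_adj_out (X := T) ?_ ?_ hak'.symm ?_⟩
  · exact mem_image_of_mem _ (mem_univ k)
  · simp [T]
  · intro x' hx' y' hy' h
    obtain ⟨a', k', rfl, rfl, h'⟩ := hT x' hx' y' hy' h
    have := (card_le_one (s := cross)).mp (by omega)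
      (a', k') (mem_filter.mpr ⟨mem_univ _, h'⟩) _ hak
    simp only [Prod.mk.injEq] at this
    simp [this]

lemma sum_card_adj_le_degree (a : Fin (m - 1)) :
    ∑ j, #{k | F.Adj (inl a) (inr (j, k))} ≤ F.degree (inl a) :=
  calc ∑ j, #{k | F.Adj (inl a) (inr (j, k))}
        = #{p : Fin m × Fin 3 | F.Adj (inl a) (inr p)} := by
        simp only [card_filter, Fintype.sum_prod_type]
    _ ≤ #(F.neighborFinset (inl a)) :=
        card_le_card_of_injOn inr (fun p hp => by simpa using hp) inr_injective.injOn
    _ = F.degree (inl a) := card_neighborFinset_eq_degree _ _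

theorem not_hasK2OddCycleFactor (hm : 0 < m) : ¬ HasK2OddCycleFactor (Hm m) := by
  rintro ⟨F, hFH, hcomp⟩
  classical
  have hF : EdgeOrLongCycleComponents F := edgeOrLongCycleComponents_of_forall_iso hcomp
  -- every vertex of `K` spreads a weight of `2` evenly over its `F`-edges
  let w (a : Fin (m - 1)) (j : Fin m) : ℕ :=
    2 / F.degree (inl a) * #{k | F.Adj (inl a) (inr (j, k))}
  have hK (a : Fin (m - 1)) : ∑ j, w a j ≤ 2 := by
    rw [← Finset.mul_sum]
    exact (Nat.mul_le_mul_left _ (sum_card_adj_le_degree a)).trans (Nat.div_mul_le_self 2 _)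
  have hT (j : Fin m) : 2 ≤ ∑ a, w a j := by
    rcases two_le_card_adj_triangle_or_exists_degree_eq_one hFH hF j with h | ⟨a, k, hak, ha⟩
    · calc 2 ≤ #{q : Fin (m - 1) × Fin 3 | F.Adj (inl q.1) (inr (j, q.2))} := h
        _ = ∑ a, #{k | F.Adj (inl a) (inr (j, k))} := by
            simp only [card_filter, Fintype.sum_prod_type]
        _ ≤ ∑ a, w a j := sum_le_sum fun a _ => Nat.le_mul_of_pos_left _ <| by
            rcases hF.degree_eq_one_or_two (inl a) with h | h <;> simp [h]
    · calc 2 = 2 / F.degree (inl a) * 1 := by simp [ha]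
        _ ≤ w a j :=
            Nat.mul_le_mul_left _ (card_pos.mpr ⟨k, mem_filter.mpr ⟨mem_univ _, hak⟩⟩)
        _ ≤ ∑ a, w a j := single_le_sum (f := (w · j)) (fun _ _ => Nat.zero_le _) (mem_univ a)
  have := calc 2 * m = ∑ _j : Fin m, 2 := by simp [mul_comm]
    _ ≤ ∑ j, ∑ a, w a j := sum_le_sum fun j _ => hT j
    _ = ∑ a, ∑ j, w a j := sum_comm
    _ ≤ ∑ _a : Fin (m - 1), 2 := sum_le_sum fun a _ => hK a
    _ = 2 * (m - 1) := by simp [mul_comm]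
  omega

end Factor

section Toughness

variable {S : Set (Fin (m - 1) ⊕ (Fin m × Fin 3))}

lemma inl_notMem_isoSet (hS : 2 ≤ isoCount (Hm m) S) (a : Fin (m - 1)) :
    inl a ∉ isoSet (Hm m) S := by
  intro ha
  have hsub : isoSet (Hm m) S ⊆ {inl a} := fun v hv =>
    by_contra fun hva => hv.1 (ha.2 v (adj_inl_of_ne hva))
  have := Set.ncard_le_ncard hsub
  rw [Set.ncard_singleton, ← isoCount_eq_ncard_isoSet] at this
  omega

lemma inl_mem_of_two_le_isoCount (hS : 2 ≤ isoCount (Hm m) S) (a : Fin (m - 1)) :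
    inl a ∈ S := by
  obtain ⟨v, hv⟩ := Set.nonempty_of_ncard_ne_zero (s := isoSet (Hm m) S) (by
    rw [← isoCount_eq_ncard_isoSet]; omega)
  rcases v with b | p
  · exact absurd hv (inl_notMem_isoSet hS b)
  · exact hv.2 _ adj_inr_inl

lemma eq_of_mem_isoSet {p q : Fin m × Fin 3} (hp : inr p ∈ isoSet (Hm m) S)
    (hq : inr q ∈ isoSet (Hm m) S) (h : p.1 = q.1) : p = q :=
  by_contra fun hne => hq.1 (hp.2 _ (adj_inr_inr.mpr ⟨hne, h⟩))

lemma isoCount_eq_ncard_preimage (hS : 2 ≤ isoCount (Hm m) S) :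
    isoCount (Hm m) S = (inr ⁻¹' isoSet (Hm m) S).ncard := by
  have hrange : isoSet (Hm m) S ⊆ Set.range inr := by
    rintro (a | p) hv
    · exact absurd hv (inl_notMem_isoSet hS a)
    · exact ⟨p, rfl⟩
  rw [isoCount_eq_ncard_isoSet, ← Set.ncard_image_of_injective (inr ⁻¹' _) inr_injective,
    Set.image_preimage_eq_of_subset hrange]

lemma isoCount_le (hS : 2 ≤ isoCount (Hm m) S) : isoCount (Hm m) S ≤ m := by
  rw [isoCount_eq_ncard_preimage hS]
  calc (inr ⁻¹' isoSet (Hm m) S).ncard ≤ (Set.univ : Set (Fin m)).ncard :=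
        Set.ncard_le_ncard_of_injOn Prod.fst (fun _ _ => Set.mem_univ _)
          fun _ hp _ hq h => eq_of_mem_isoSet hp hq h
    _ = m := by rw [Set.ncard_univ, Nat.card_eq_fintype_card, Fintype.card_fin]

lemma sub_one_add_two_mul_isoCount_le (hS : 2 ≤ isoCount (Hm m) S) :
    m - 1 + 2 * isoCount (Hm m) S ≤ S.ncard := by
  set P := inr ⁻¹' isoSet (Hm m) S
  -- `K` and the two triangle-mates of every isolated vertex lie in `S`
  let f : Fin (m - 1) ⊕ (P × Fin 2) → S :=
    Sum.elim (fun a => ⟨inl a, inl_mem_of_two_le_isoCount hS a⟩) fun pe =>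
      ⟨inr (pe.1.1.1, pe.1.1.2.succAbove pe.2), pe.1.2.2 _ <| adj_inr_inr.mpr
        ⟨fun h => Fin.succAbove_ne _ _ (congrArg Prod.snd h).symm, rfl⟩⟩
  have hf : Function.Injective f := by
    rintro (a | ⟨p, e⟩) (b | ⟨q, e'⟩) h <;> simp only [f, Sum.elim_inl, Sum.elim_inr,
      Subtype.mk.injEq, inl.injEq, inr.injEq, reduceCtorEq, Prod.mk.injEq] at h
    · rw [h]
    · obtain rfl : p = q := Subtype.ext (eq_of_mem_isoSet p.2 q.2 h.1)
      rw [Fin.succAbove_right_inj.mp h.2]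
  have := Nat.card_le_card_of_injective f hf
  rwa [Nat.card_sum, Nat.card_prod, Nat.card_coe_set_eq, Nat.card_coe_set_eq,
    Nat.card_eq_fintype_card, Fintype.card_fin, Nat.card_eq_fintype_card, Fintype.card_fin,
    ← isoCount_eq_ncard_preimage hS, mul_comm] at this

lemma isoSet_compl_range_zero :
    isoSet (Hm m) (Set.range fun j : Fin m => inr (j, 0))ᶜ = Set.range fun j => inr (j, 0) := by
  ext v
  refine ⟨fun hv => not_not.mp hv.1, ?_⟩
  rintro ⟨j, rfl⟩
  refine ⟨not_not.mpr ⟨j, rfl⟩, ?_⟩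
  rintro w hw ⟨j', rfl⟩
  obtain ⟨hne, hj⟩ := adj_inr_inr.mp hw
  exact hne (Prod.ext hj rfl)

theorem isLeast_isoToughness (hm : 2 ≤ m) :
    IsLeast {x : ℝ | ∃ S, 2 ≤ isoCount (Hm m) S ∧ x = S.ncard / isoCount (Hm m) S}
      ((3 * m - 1) / m) := by
  set R : Set (Fin (m - 1) ⊕ (Fin m × Fin 3)) := Set.range fun j => inr (j, 0) with hR_def
  have hR : R.ncard = m := by
    rw [hR_def, ← Set.image_univ, Set.ncard_image_of_injective _ fun _ _ h => by simpa using h,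
      Set.ncard_univ, Nat.card_eq_fintype_card, Fintype.card_fin]
  have hiso : isoCount (Hm m) Rᶜ = m := by
    rw [isoCount_eq_ncard_isoSet, isoSet_compl_range_zero, hR]
  have hRc : Rᶜ.ncard = 3 * m - 1 := by
    have := Set.ncard_add_ncard_compl R
    rw [hR, Nat.card_eq_fintype_card, Fintype.card_sum, Fintype.card_prod] at this
    simp only [Fintype.card_fin] at this
    omega
  refine ⟨⟨Rᶜ, hiso.symm ▸ hm, ?_⟩, ?_⟩
  · rw [hiso, hRc, Nat.cast_sub (by omega)]
    push_cast
    rfl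
  · rintro x ⟨S, hS, rfl⟩
    have hle : ((m - 1 + 2 * isoCount (Hm m) S : ℕ) : ℝ) ≤ S.ncard :=
      Nat.cast_le.mpr (sub_one_add_two_mul_isoCount_le hS)
    have him : (isoCount (Hm m) S : ℝ) ≤ m := Nat.cast_le.mpr (isoCount_le hS)
    have hi : (2 : ℝ) ≤ isoCount (Hm m) S := Nat.ofNat_le_cast.mpr hS
    have hm1 : (1 : ℝ) ≤ m := Nat.one_le_cast.mpr (by omega)
    rw [Nat.cast_add, Nat.cast_sub (by omega), Nat.cast_mul] at hle
    push_cast at hle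
    rw [div_le_div_iff₀ (by linarith) (by linarith)]
    nlinarith [mul_nonneg (sub_nonneg.mpr hm1) (sub_nonneg.mpr him)]

end Toughness

end Hm

theorem stmt16 (m : ℕ) (hm : 3 ≤ m) :
    ¬ HasK2OddCycleFactor (Hm m) ∧
      isoToughness (Hm m) = (3 * (m : ℝ) - 1) / (m : ℝ) :=
  ⟨Hm.not_hasK2OddCycleFactor (by omega), (Hm.isLeast_isoToughness (by omega)).csInf_eq⟩
end

section
/- For every integer m ≥ 3, let H_m be the graph obtained from a complete graph K on m − 1 vertices and m pairwise disjoint triangles by joining every vertex of each triangle to every vertex of K. Then the binding number of H_m equals bind(H_m) = 4/3. -/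
open SimpleGraph

variable {V : Type*}

/-! Let `Y` be nonempty with some vertex `u ∉ N(Y)`. If `u` lies in the clique `K`, it is adjacent
to every other vertex, so `Y = {u}` and `N(Y)` contains all `3m` triangle vertices. Otherwise `u`
lies in a triangle `T_q`; then `Y` avoids `K`, so `K ⊆ N(Y)`, and `Y` meets `T_q` in at most `u`.
A triangle meeting `Y` in `a = 0, 1, 2, 3` vertices meets `N(Y)` in at least `n = 0, 2, 3, 3`
vertices, so `4a ≤ 3n + 3`, and even `4a ≤ 3n` for `T_q`. Summing, the `3(m - 1)` spare units are
paid for by `3|K|`, whence `4|Y| ≤ 3|N(Y)|`. Equality holds when `Y` is the union of all triangles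
but one. -/

def rightSlice {α β γ : Type*} (S : Set (α ⊕ β × γ)) (b : β) : Set γ := {c | Sum.inr (b, c) ∈ S}

section Counting

variable {α β γ : Type*} [Fintype α] [Fintype β] [Fintype γ]

theorem ncard_eq_ncard_preimage_inl_add_sum_ncard_rightSlice (S : Set (α ⊕ β × γ)) :
    S.ncard = (Sum.inl ⁻¹' S).ncard + ∑ b, (rightSlice S b).ncard := by
  classical
  simp only [Set.ncard_eq_toFinset_card', ← Set.filter_mem_univ_eq_toFinset, Finset.card_filter,
    Fintype.sum_sum_type, Fintype.sum_prod_type, rightSlice, Set.preimage, Set.mem_ofPred_eq]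

theorem sum_ncard_setOf_ne (b₀ : β) :
    ∑ b : β, {_c : γ | b ≠ b₀}.ncard = Fintype.card γ * (Fintype.card β - 1) := by
  classical
  have hite (b : β) : {_c : γ | b ≠ b₀}.ncard = if b = b₀ then 0 else Fintype.card γ := by
    split_ifs with h <;> simp [h]
  simp [hite, Finset.sum_ite, Finset.filter_ne', mul_comm]

theorem ncard_image_inr_setOf_fst_ne (b₀ : β) :
    (Sum.inr '' {a | a.1 ≠ b₀} : Set (α ⊕ β × γ)).ncard =
      Fintype.card γ * (Fintype.card β - 1) := by
  rw [ncard_eq_ncard_preimage_inl_add_sum_ncard_rightSlice]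
  simp [rightSlice, sum_ncard_setOf_ne]

theorem ncard_compl_image_inr_setOf_fst_eq (b₀ : β) :
    ((Sum.inr '' {a | a.1 = b₀})ᶜ : Set (α ⊕ β × γ)).ncard =
      Fintype.card α + Fintype.card γ * (Fintype.card β - 1) := by
  rw [ncard_eq_ncard_preimage_inl_add_sum_ncard_rightSlice]
  simp [rightSlice, sum_ncard_setOf_ne]

end Counting

theorem nbhd_mono {G : SimpleGraph V} {Y Z : Set V} (h : Y ⊆ Z) : nbhd G Y ⊆ nbhd G Z :=
  fun _ ⟨y, hy, hadj⟩ => ⟨y, h hy, hadj⟩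

theorem nbhd_top_singleton (v : V) : nbhd ⊤ {v} = {v}ᶜ := by
  ext w
  simp [nbhd, eq_comm]

theorem nbhd_top_eq_univ {Y : Set V} (hY : Y.Nontrivial) : nbhd ⊤ Y = Set.univ := by
  refine Set.eq_univ_of_forall fun v => ?_
  obtain ⟨y, hy, hyv⟩ := hY.exists_ne v
  exact ⟨y, hy, by simpa using hyv⟩

theorem four_mul_ncard_le_ncard_nbhd_top_fin_three (s : Set (Fin 3)) :
    4 * s.ncard ≤ 3 * (nbhd ⊤ s).ncard + 3 ∧
      (s.ncard ≤ 1 → 4 * s.ncard ≤ 3 * (nbhd ⊤ s).ncard) := by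
  have hs : s.ncard ≤ 3 := by simpa using Set.ncard_le_card s
  have hone : 0 < s.ncard → 2 ≤ (nbhd ⊤ s).ncard := by
    intro h
    obtain ⟨v, hv⟩ := (Set.ncard_pos).1 h
    calc 2 = ({v}ᶜ : Set (Fin 3)).ncard := by rw [Set.ncard_compl]; simp
      _ ≤ (nbhd ⊤ s).ncard := by
        rw [← nbhd_top_singleton]
        exact Set.ncard_le_ncard (nbhd_mono (Set.singleton_subset_iff.2 hv))
  have htwo : 1 < s.ncard → (nbhd ⊤ s).ncard = 3 := by
    intro h
    rw [nbhd_top_eq_univ (Set.one_lt_ncard_iff_nontrivial.1 h)]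
    simp
  omega

theorem bindingNumber_eq_of_isLeast [Finite V] {G : SimpleGraph V} {r : ℝ}
    (hr : ∃ Y : Set V, Y.Nonempty ∧ nbhd G Y ≠ Set.univ ∧ ((nbhd G Y).ncard : ℝ) / Y.ncard = r)
    (hle : ∀ Y : Set V, Y.Nonempty → nbhd G Y ≠ Set.univ → r * Y.ncard ≤ (nbhd G Y).ncard) :
    bindingNumber G = r := by
  refine IsLeast.csInf_eq ⟨?_, ?_⟩
  · obtain ⟨Y, hY, hN, rfl⟩ := hr
    exact ⟨Y, hY, hN, rfl⟩
  · rintro _ ⟨Y, hY, hN, rfl⟩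
    have hpos : (0 : ℝ) < Y.ncard := by exact_mod_cast hY.ncard_pos
    exact (le_div_iff₀ hpos).2 (hle Y hY hN)

section Hm

variable {m : ℕ}

theorem Hm_adj_inl (w : Fin (m - 1)) (x : Fin (m - 1) ⊕ (Fin m × Fin 3)) :
    (Hm m).Adj (Sum.inl w) x ↔ Sum.inl w ≠ x :=
  ⟨And.left, fun h => ⟨h, fun _ _ hp _ => (Sum.inr_ne_inl hp.symm).elim⟩⟩

theorem Hm_adj_inr_inl (a : Fin m × Fin 3) (w : Fin (m - 1)) :
    (Hm m).Adj (Sum.inr a) (Sum.inl w) :=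
  ⟨Sum.inr_ne_inl, fun _ _ _ hq => (Sum.inl_ne_inr hq).elim⟩

theorem Hm_adj_inr_inr {p q : Fin m} {i j : Fin 3} :
    (Hm m).Adj (Sum.inr (p, i)) (Sum.inr (q, j)) ↔ p = q ∧ i ≠ j := by
  constructor
  · rintro ⟨hne, hsame⟩
    have hpq : p = q := hsame _ _ rfl rfl
    exact ⟨hpq, fun hij => hne (by rw [hpq, hij])⟩
  · rintro ⟨rfl, hij⟩
    refine ⟨by simpa using hij, fun a b ha hb => ?_⟩
    cases Sum.inr_injective ha
    cases Sum.inr_injective hb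
    rfl

theorem Hm_subset_singleton_of_inl_notMem_nbhd {Y : Set (Fin (m - 1) ⊕ (Fin m × Fin 3))}
    {w : Fin (m - 1)} (hw : Sum.inl w ∉ nbhd (Hm m) Y) : Y ⊆ {Sum.inl w} := by
  intro y hy
  by_contra hyw
  refine hw ⟨y, hy, ?_⟩
  rcases y with w' | a
  · exact (Hm_adj_inl w' _).2 hyw
  · exact Hm_adj_inr_inl a w

theorem Hm_of_inr_notMem_nbhd {Y : Set (Fin (m - 1) ⊕ (Fin m × Fin 3))} {q : Fin m} {j : Fin 3}
    (hqj : Sum.inr (q, j) ∉ nbhd (Hm m) Y) : Sum.inl ⁻¹' Y = ∅ ∧ rightSlice Y q ⊆ {j} := by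
  refine ⟨Set.eq_empty_of_forall_notMem fun w hw => hqj ⟨_, hw, (Hm_adj_inl w _).2 Sum.inl_ne_inr⟩,
    fun i hi => ?_⟩
  by_contra hij
  exact hqj ⟨_, hi, Hm_adj_inr_inr.2 ⟨rfl, hij⟩⟩

theorem nbhd_top_rightSlice_subset_Hm (Y : Set (Fin (m - 1) ⊕ (Fin m × Fin 3))) (p : Fin m) :
    nbhd ⊤ (rightSlice Y p) ⊆ rightSlice (nbhd (Hm m) Y) p :=
  fun _ ⟨_, hj, hji⟩ => ⟨_, hj, Hm_adj_inr_inr.2 ⟨rfl, hji⟩⟩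

theorem Hm_four_mul_ncard_rightSlice_le (Y : Set (Fin (m - 1) ⊕ (Fin m × Fin 3))) (p : Fin m) :
    4 * (rightSlice Y p).ncard ≤ 3 * (rightSlice (nbhd (Hm m) Y) p).ncard + 3 ∧
      ((rightSlice Y p).ncard ≤ 1 →
        4 * (rightSlice Y p).ncard ≤ 3 * (rightSlice (nbhd (Hm m) Y) p).ncard) := by
  have hle := Set.ncard_le_ncard (nbhd_top_rightSlice_subset_Hm Y p)
  have := four_mul_ncard_le_ncard_nbhd_top_fin_three (rightSlice Y p)
  omega

theorem Hm_four_mul_ncard_le_of_preimage_inl_eq_empty {Y : Set (Fin (m - 1) ⊕ (Fin m × Fin 3))}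
    {q : Fin m} (hY : Y.Nonempty) (hleft : Sum.inl ⁻¹' Y = ∅) (hq : (rightSlice Y q).ncard ≤ 1) :
    4 * Y.ncard ≤ 3 * (nbhd (Hm m) Y).ncard := by
  have hNleft : Sum.inl ⁻¹' nbhd (Hm m) Y = Set.univ := by
    obtain ⟨_ | a, hy⟩ := hY
    · exact (Set.eq_empty_iff_forall_notMem.1 hleft _ hy).elim
    · exact Set.eq_univ_of_forall fun w => ⟨_, hy, Hm_adj_inr_inl a w⟩
  have hsum : ∑ p ∈ Finset.univ.erase q, 4 * (rightSlice Y p).ncard ≤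
      ∑ p ∈ Finset.univ.erase q, (3 * (rightSlice (nbhd (Hm m) Y) p).ncard + 3) :=
    Finset.sum_le_sum fun p _ => (Hm_four_mul_ncard_rightSlice_le Y p).1
  rw [← Finset.mul_sum, Finset.sum_add_distrib, ← Finset.mul_sum, Finset.sum_const,
    Finset.card_erase_of_mem (Finset.mem_univ q)] at hsum
  have hsliceq := (Hm_four_mul_ncard_rightSlice_le Y q).2 hq
  rw [ncard_eq_ncard_preimage_inl_add_sum_ncard_rightSlice Y,
    ncard_eq_ncard_preimage_inl_add_sum_ncard_rightSlice (nbhd (Hm m) Y), hleft, hNleft,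
    ← Finset.add_sum_erase _ _ (Finset.mem_univ q), ← Finset.add_sum_erase _ _ (Finset.mem_univ q)]
  simp only [Set.ncard_empty, Set.ncard_univ, Nat.card_eq_fintype_card, Fintype.card_fin,
    Finset.card_univ, smul_eq_mul] at hsum ⊢
  omega

theorem Hm_four_mul_ncard_le {Y : Set (Fin (m - 1) ⊕ (Fin m × Fin 3))} (hY : Y.Nonempty)
    (hN : nbhd (Hm m) Y ≠ Set.univ) : 4 * Y.ncard ≤ 3 * (nbhd (Hm m) Y).ncard := by
  obtain ⟨u, hu⟩ := (Set.ne_univ_iff_exists_notMem _).1 hN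
  rcases u with w | ⟨q, j⟩
  · have hYw : Y = {Sum.inl w} :=
      (Set.subset_singleton_iff_eq.1 (Hm_subset_singleton_of_inl_notMem_nbhd hu)).resolve_left
        hY.ne_empty
    have hinr : Set.range Sum.inr ⊆ nbhd (Hm m) Y := by
      rintro _ ⟨a, rfl⟩
      exact ⟨Sum.inl w, hYw ▸ rfl, (Hm_adj_inl w _).2 Sum.inl_ne_inr⟩
    have h3m := Set.ncard_le_ncard hinr
    rw [Set.ncard_range_of_injective Sum.inr_injective] at h3m
    simp only [hYw, Set.ncard_singleton, Nat.card_eq_fintype_card, Fintype.card_prod,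
      Fintype.card_fin] at h3m ⊢
    have := w.pos
    omega
  · obtain ⟨hleft, hq⟩ := Hm_of_inr_notMem_nbhd hu
    exact Hm_four_mul_ncard_le_of_preimage_inl_eq_empty hY hleft
      ((Set.ncard_le_ncard hq).trans (Set.ncard_singleton j).le)

theorem Hm_nbhd_image_inr_setOf_fst_ne (p₀ : Fin m) :
    nbhd (Hm m) (Sum.inr '' {a | a.1 ≠ p₀}) = (Sum.inr '' {a | a.1 = p₀})ᶜ := by
  ext x
  rcases x with w | ⟨p, i⟩
  · have : Nontrivial (Fin m) := Fin.nontrivial_iff_two_le.2 (by have := w.pos; omega)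
    obtain ⟨p, hp⟩ := exists_ne p₀
    simpa using ⟨_, ⟨(p, 0), hp, rfl⟩, Hm_adj_inr_inl _ w⟩
  · simp only [Set.mem_compl_iff, Set.mem_image, Sum.inr.injEq, exists_eq_right]
    constructor
    · rintro ⟨_, ⟨⟨p', i'⟩, hp', rfl⟩, hadj⟩ rfl
      exact hp' (Hm_adj_inr_inr.1 hadj).1
    · intro hp
      have hi : i + 1 ≠ i := by simp
      exact ⟨_, ⟨(p, i + 1), hp, rfl⟩, Hm_adj_inr_inr.2 ⟨rfl, hi⟩⟩

theorem Hm_exists_ncard_nbhd_div_ncard_eq (hm : 2 ≤ m) :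
    ∃ Y : Set (Fin (m - 1) ⊕ (Fin m × Fin 3)), Y.Nonempty ∧ nbhd (Hm m) Y ≠ Set.univ ∧
      ((nbhd (Hm m) Y).ncard : ℝ) / Y.ncard = 4 / 3 := by
  let p₀ : Fin m := ⟨0, by omega⟩
  refine ⟨Sum.inr '' {a | a.1 ≠ p₀}, ⟨_, (⟨1, by omega⟩, 0), by simp [p₀], rfl⟩, ?_, ?_⟩
  · rw [Hm_nbhd_image_inr_setOf_fst_ne, Set.compl_ne_univ]
    exact ⟨_, (p₀, 0), rfl, rfl⟩
  · have : ((m - 1 : ℕ) : ℝ) ≠ 0 := by norm_cast; omega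
    rw [Hm_nbhd_image_inr_setOf_fst_ne, ncard_compl_image_inr_setOf_fst_eq,
      ncard_image_inr_setOf_fst_ne]
    simp only [Fintype.card_fin]
    push_cast
    field_simp
    ring

end Hm

theorem stmt18 (m : ℕ) (hm : 3 ≤ m) :
    bindingNumber (Hm m) = 4 / 3 := by
  refine bindingNumber_eq_of_isLeast (Hm_exists_ncard_nbhd_div_ncard_eq (by omega))
    fun Y hY hN => ?_
  have h : ((4 * Y.ncard : ℕ) : ℝ) ≤ (3 * (nbhd (Hm m) Y).ncard : ℕ) := by
    exact_mod_cast Hm_four_mul_ncard_le hY hN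
  push_cast at h
  linarith
end
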